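/- Let q ≥ 3 be an integer. For every β ≥ 0, (d/ds) D_β(s)|_{s=1/q} = −1 + 2β/q and (d²/ds²) D_β(s)|_{s=1/q} = 4β²(q−2)/(q(q−1)); in particular the second derivative at 1/q is strictly positive for β > 0. Consequently, β_s(q) < q/2. -/

import Mathlib

/-- The drift function `D_β(x) = −x + (1 + (q−1) e^{2β(1−qx)/(q−1)})⁻¹`,
equivalently `−x + e^{2βx}/(e^{2βx} + (q−1)e^{2β(1−x)/(q−1)})`. -/
noncomputable def Dfun (q : ℕ) (β x : ℝ) : ℝ :=
  -x + (1 + ((q : ℝ) - 1) * Real.exp (2 * β * (1 - (q : ℝ) * x) / ((q : ℝ) - 1)))⁻¹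

/-- The dynamical (spinodal) critical inverse temperature
`β_s(q) = sup {β ≥ 0 : D_β(x) ≠ 0 for all x ∈ (1/q,1)}`. -/
noncomputable def betaS (q : ℕ) : ℝ :=
  sSup {β : ℝ | 0 ≤ β ∧ ∀ x ∈ Set.Ioo (1 / (q : ℝ)) 1, Dfun q β x ≠ 0}

/-!
The logistic term `p = updateProb q β` of `D_β = -x + p` solves `p' = c p (1 - p)` with
`c = 2βq/(q-1)` and takes the value `1/q` at `x = 1/q`; differentiating the equation once more gives
`p'' = c² p (1 - p) (1 - 2p)`, and both derivatives of `D_β` at `1/q` follow.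

For the bound on `β_s`, `D_β(1) < 0` for every `β`, while at `x = 2/q` the exponent is `-2β/(q-1)`, so
`D_β(2/q) ≥ 0` as soon as `β ≥ (q-1)/2 · log (2(q-1)/(q-2))`. By the intermediate value theorem every such
`β` gives a zero of `D_β` in `(1/q, 1)`, hence `β_s(q)` is at most this threshold, which is below `q/2`
because `exp (q/(q-1)) ≥ e q/(q-1) > 2(q-1)/(q-2)`.
-/

open Real Set

noncomputable def updateProb (q : ℕ) (β x : ℝ) : ℝ :=
  (1 + ((q : ℝ) - 1) * exp (2 * β * (1 - (q : ℝ) * x) / ((q : ℝ) - 1)))⁻¹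

lemma hasDerivAt_deriv_of_logistic {f : ℝ → ℝ} {c : ℝ}
    (hf : ∀ x, HasDerivAt f (c * f x * (1 - f x)) x) (x : ℝ) :
    HasDerivAt (deriv f) (c ^ 2 * f x * (1 - f x) * (1 - 2 * f x)) x := by
  have hderiv : deriv f = fun x => c * f x * (1 - f x) := funext fun x => (hf x).deriv
  rw [hderiv]
  exact (((hf x).const_mul c).mul ((hf x).const_sub 1)).congr_deriv (by ring)

section

variable {q : ℕ} (β : ℝ)

lemma hasDerivAt_updateProb (hq : 1 < q) (x : ℝ) :
    HasDerivAt (updateProb q β)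
      (2 * β * q / (q - 1) * updateProb q β x * (1 - updateProb q β x)) x := by
  have hq1 : (0 : ℝ) < q - 1 := by
    rw [sub_pos]; exact_mod_cast hq
  set E := exp (2 * β * (1 - (q : ℝ) * x) / ((q : ℝ) - 1))
  have hE : HasDerivAt (fun x => 1 + ((q : ℝ) - 1) * exp (2 * β * (1 - q * x) / (q - 1)))
      ((q - 1) * (E * (2 * β * (0 - q * 1) / (q - 1)))) x :=
    (((((hasDerivAt_const x 1).sub ((hasDerivAt_id x).const_mul _)).const_mul _).div_const
      _).exp.const_mul _).const_add 1
  have hpos : 0 < 1 + ((q : ℝ) - 1) * E := by positivity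
  refine (hE.inv hpos.ne').congr_deriv ?_
  rw [show updateProb q β x = (1 + ((q : ℝ) - 1) * E)⁻¹ from rfl]
  field_simp
  ring

lemma updateProb_inv_natCast (hq : q ≠ 0) : updateProb q β (1 / q) = 1 / q := by
  simp only [updateProb, one_div, mul_inv_cancel₀ (Nat.cast_ne_zero.mpr hq : (q : ℝ) ≠ 0), sub_self, mul_zero,
    zero_div, exp_zero, mul_one, add_sub_cancel]

lemma deriv_Dfun (hq : 1 < q) (x : ℝ) :
    deriv (Dfun q β) x = -1 + deriv (updateProb q β) x :=
  ((hasDerivAt_neg x).add (hasDerivAt_updateProb β hq x).differentiableAt.hasDerivAt).deriv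

lemma deriv_deriv_Dfun (hq : 1 < q) : deriv (deriv (Dfun q β)) = deriv (deriv (updateProb q β)) := by
  rw [funext (deriv_Dfun β hq)]
  exact funext fun x => deriv_const_add _

lemma Dfun_one_neg (hq : 1 < q) : Dfun q β 1 < 0 := by
  have hq1 : (0 : ℝ) < q - 1 := by
    rw [sub_pos]; exact_mod_cast hq
  have hlt : 1 < 1 + ((q : ℝ) - 1) * exp (2 * β * (1 - q * 1) / (q - 1)) := by
    simp only [lt_add_iff_pos_right]; positivity
  simp only [Dfun]
  linarith [inv_lt_one_of_one_lt₀ hlt]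

lemma exists_Dfun_eq_zero (hq : 1 < q) {x : ℝ} (hx : 1 / q < x) (hx1 : x ≤ 1)
    (hD : 0 ≤ Dfun q β x) : ∃ y ∈ Ioo (1 / (q : ℝ)) 1, Dfun q β y = 0 := by
  have hcont : ContinuousOn (Dfun q β) (Icc x 1) :=
    (continuous_neg.add (continuous_iff_continuousAt.mpr fun y =>
      (hasDerivAt_updateProb β hq y).continuousAt)).continuousOn
  obtain ⟨y, hy, hy0⟩ := intermediate_value_Icc' hx1 hcont ⟨(Dfun_one_neg β hq).le, hD⟩
  refine ⟨y, ⟨hx.trans_le hy.1, hy.2.lt_of_ne ?_⟩, hy0⟩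
  rintro rfl
  exact (Dfun_one_neg β hq).ne hy0

/-- The threshold on `β` is the value at which `D_β(2/q) = 0`. -/
lemma Dfun_two_div_nonneg (hq : 3 ≤ q)
    (hβ : ((q : ℝ) - 1) / 2 * log (2 * (q - 1) / (q - 2)) ≤ β) : 0 ≤ Dfun q β (2 / q) := by
  have hq3 : (3 : ℝ) ≤ q := by exact_mod_cast hq
  have hq1 : (0 : ℝ) < q - 1 := by linarith
  have hq2 : (0 : ℝ) < q - 2 := by linarith
  have hexp : exp (2 * β * (1 - q * (2 / q)) / (q - 1)) ≤ (q - 2) / (2 * (q - 1)) := by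
    have hexponent : 2 * β * (1 - q * (2 / q)) / (q - 1) = -(2 * β / (q - 1)) := by
      field_simp; ring
    have hR : (q - 2) / (2 * (q - 1)) = exp (-log (2 * (q - 1) / (q - 2))) := by
      rw [exp_neg, exp_log (by positivity), inv_div]
    rw [hexponent, hR, exp_le_exp, neg_le_neg_iff, le_div_iff₀ hq1]
    linarith
  have hden : 1 + ((q : ℝ) - 1) * exp (2 * β * (1 - q * (2 / q)) / (q - 1)) ≤ q / 2 := by
    have hsimp : ((q : ℝ) - 1) * ((q - 2) / (2 * (q - 1))) = (q - 2) / 2 := by field_simp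
    linarith [mul_le_mul_of_nonneg_left hexp hq1.le]
  simp only [Dfun]
  have := inv_anti₀ (by positivity) hden
  rw [inv_div] at this
  linarith

lemma betaS_le (hq : 3 ≤ q) : betaS q ≤ ((q : ℝ) - 1) / 2 * log (2 * (q - 1) / (q - 2)) := by
  have hq3 : (3 : ℝ) ≤ q := by exact_mod_cast hq
  refine Real.sSup_le (fun b ⟨_, hb⟩ => not_lt.mp fun hlt => ?_) ?_
  · obtain ⟨y, hy, hy0⟩ := exists_Dfun_eq_zero b (by omega)
      (by gcongr; norm_num) ((div_le_one (by positivity)).mpr (by linarith))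
      (Dfun_two_div_nonneg b hq hlt.le)
    exact hb y hy hy0
  · have hR : 1 ≤ 2 * ((q : ℝ) - 1) / (q - 2) := by
      rw [le_div_iff₀ (by linarith)]; linarith
    exact mul_nonneg (by linarith) (log_nonneg hR)

end

lemma sub_one_div_two_mul_log_lt {Q : ℝ} (hQ : 3 ≤ Q) :
    (Q - 1) / 2 * log (2 * (Q - 1) / (Q - 2)) < Q / 2 := by
  have hQ1 : 0 < Q - 1 := by linarith
  have hQ2 : 0 < Q - 2 := by linarith
  have hexp : exp 1 * (Q / (Q - 1)) ≤ exp (Q / (Q - 1)) := by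
    rw [show Q / (Q - 1) = 1 + 1 / (Q - 1) by field_simp; ring, exp_add]
    gcongr
    linarith [add_one_le_exp (1 / (Q - 1))]
  -- The bound `e > 2.7` is already enough at `Q = 3`.
  have hratio : 2 * (Q - 1) / (Q - 2) < exp 1 * (Q / (Q - 1)) := by
    rw [div_lt_iff₀ hQ2, mul_div_assoc', div_mul_eq_mul_div, lt_div_iff₀ hQ1]
    nlinarith [exp_one_gt_d9, mul_pos (by linarith : (0 : ℝ) < Q) hQ2]
  have hlog : log (2 * (Q - 1) / (Q - 2)) < Q / (Q - 1) :=
    (log_lt_iff_lt_exp (by positivity)).mpr (hratio.trans_le hexp)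
  calc (Q - 1) / 2 * log (2 * (Q - 1) / (Q - 2)) < (Q - 1) / 2 * (Q / (Q - 1)) := by gcongr
    _ = Q / 2 := by field_simp

/-- (From the proof of Proposition 5.1): for `q ≥ 3` and every `β ≥ 0`,
`(d/ds) D_β(s)|_{s=1/q} = −1 + 2β/q` and
`(d²/ds²) D_β(s)|_{s=1/q} = 4β²(q−2)/(q(q−1))`, the latter being strictly
positive for `β > 0`; consequently `β_s(q) < q/2`. -/
theorem Dfun_derivs_at_equiproportion (q : ℕ) (hq : 3 ≤ q) :
    (∀ β : ℝ, 0 ≤ β →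
      deriv (fun x => Dfun q β x) (1 / (q : ℝ)) = -1 + 2 * β / (q : ℝ) ∧
      deriv (deriv (fun x => Dfun q β x)) (1 / (q : ℝ)) =
        4 * β ^ 2 * ((q : ℝ) - 2) / ((q : ℝ) * ((q : ℝ) - 1)) ∧
      (0 < β → 0 < deriv (deriv (fun x => Dfun q β x)) (1 / (q : ℝ)))) ∧
    betaS q < (q : ℝ) / 2 := by
  have hq1 : 1 < q := by omega
  have hq3 : (3 : ℝ) ≤ q := by exact_mod_cast hq
  have hq0 : (q : ℝ) - 1 ≠ 0 := by linarith
  refine ⟨fun β _ => ?_, (betaS_le hq).trans_lt (sub_one_div_two_mul_log_lt hq3)⟩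
  have hp := updateProb_inv_natCast β (by omega : q ≠ 0)
  have hd2 : deriv (deriv (Dfun q β)) (1 / q) = 4 * β ^ 2 * (q - 2) / (q * (q - 1)) := by
    rw [deriv_deriv_Dfun β hq1,
      (hasDerivAt_deriv_of_logistic (hasDerivAt_updateProb β hq1) _).deriv, hp]
    field_simp
    ring
  refine ⟨?_, hd2, fun hβ => ?_⟩
  · rw [deriv_Dfun β hq1, (hasDerivAt_updateProb β hq1 _).deriv, hp]
    field_simp
  · rw [hd2]
    have : (0 : ℝ) < q - 2 := by linarith
    have : (0 : ℝ) < q - 1 := by linarith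
    positivity
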